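/- arXiv:0704.3916 — 3 statements merged into one kernel-verified Lean document; each statement's English description precedes it below -/
import Mathlib

section
/- Let (X, d, μ) be a doubling metric measure space, 1 < p < ∞, and let f ∈ L^1_loc(X) be non-negative and satisfy the reverse Hölder inequality (⨍_B f^p dμ)^{1/p} ≤ c ⨍_B f dμ for all balls B. Then for every ball B₀ in X and every λ > ess inf_{B₀} Mf, one has ∫_{{x ∈ B₀ : Mf(x) > λ}} f^p dμ ≤ c' λ^p μ({x ∈ 100B₀ : Mf(x) > λ}), where c' depends only on p, the doubling constant and c, and Mf is the Hardy–Littlewood maximal function restricted to 100B₀. -/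
open MeasureTheory Metric
open scoped NNReal ENNReal

/-- `μ` is a doubling measure with doubling constant `c_d`. -/
def IsDoublingMeasure {X : Type*} [MetricSpace X] [MeasurableSpace X]
    (μ : Measure X) (c_d : ℝ≥0) : Prop :=
  ∀ (x : X) (r : ℝ), 0 < r → μ (ball x (2 * r)) ≤ (c_d : ℝ≥0∞) * μ (ball x r)

/-- `f` satisfies the reverse Hölder inequality with exponent `p` and constant `c`. -/
def ReverseHolder {X : Type*} [MetricSpace X] [MeasurableSpace X]
    (μ : Measure X) (p c : ℝ) (f : X → ℝ) : Prop :=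
  ∀ (x : X) (r : ℝ), 0 < r →
    IntegrableOn (fun y => f y ^ p) (ball x r) μ ∧
    (⨍ y in ball x r, f y ^ p ∂μ) ^ (1 / p) ≤ c * ⨍ y in ball x r, f y ∂μ

/-- The Hardy–Littlewood maximal function of `f` restricted to the ball `100B₀`, where
`B₀ = B(x₀, r₀)`:  `Mf(y) = sup { ⨍_B |f| dμ : B ∋ y, B ⊆ 100B₀ }`. -/
noncomputable def restrictedMaximal {X : Type*} [MetricSpace X] [MeasurableSpace X]
    (μ : Measure X) (f : X → ℝ) (x₀ : X) (r₀ : ℝ) (y : X) : ℝ :=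
  sSup ((fun B : X × ℝ => ⨍ z in ball B.1 B.2, |f z| ∂μ) ''
    {B : X × ℝ | 0 < B.2 ∧ y ∈ ball B.1 B.2 ∧ ball B.1 B.2 ⊆ ball x₀ (100 * r₀)})

/-!
Since `λ` exceeds the essential infimum of `Mf` on `B₀`, some `z₀ ∈ B₀` has `Mf(z₀) < λ`: every
ball through `z₀` inside `100B₀` is *light* (average of `f` at most `λ`). Each point of
`B₀ ∩ {Mf > λ}` lies in a *heavy* ball `P ⊆ 100B₀`. Enlarging `P` by factors of `8` eventually
captures `z₀`, so we may replace `P` by a heavy ball whose `8`-fold enlargement is light (for large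
`P`, take `100B₀` itself as the light ball). On a light ball `Q` the reverse Hölder inequality
gives `∫_Q f^p ≤ (cλ)^p μ(Q)`, and `μ(Q) ≤ c_d^8 μ(P)` by doubling. A Vitali subfamily of the heavy
balls is disjoint, lies in `{Mf > λ}`, and its light companions cover `B₀ ∩ {Mf > λ}`.

The supremum defining `Mf` is junk (zero) where it is unbounded; by the weak type `(1,1)` bound
for the maximal function, proved with the same covering, this happens only on a null set.
-/

open Set Filter Function

section Doubling

variable {X : Type*} [MetricSpace X] [MeasurableSpace X] {μ : Measure X} {c_d : ℝ≥0}

theorem IsDoublingMeasure.mono (hdb : IsDoublingMeasure μ c_d) {c_d' : ℝ≥0} (h : c_d ≤ c_d') :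
    IsDoublingMeasure μ c_d' :=
  fun x r hr => (hdb x r hr).trans (by gcongr)

theorem IsDoublingMeasure.measure_ball_le_pow_mul (hdb : IsDoublingMeasure μ c_d) (x : X)
    {r : ℝ} (hr : 0 < r) {k : ℕ} {s : ℝ} (hs : s ≤ 2 ^ k * r) :
    μ (ball x s) ≤ (c_d : ℝ≥0∞) ^ k * μ (ball x r) := by
  induction k generalizing s with
  | zero =>
    rw [pow_zero, one_mul] at hs ⊢
    exact measure_mono (ball_subset_ball hs)
  | succ k ih =>
    calc μ (ball x s) ≤ μ (ball x (2 * (2 ^ k * r))) :=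
          measure_mono (ball_subset_ball (by rw [pow_succ] at hs; linarith))
      _ ≤ c_d * μ (ball x (2 ^ k * r)) := hdb x _ (by positivity)
      _ ≤ c_d * ((c_d : ℝ≥0∞) ^ k * μ (ball x r)) := by gcongr; exact ih le_rfl
      _ = (c_d : ℝ≥0∞) ^ (k + 1) * μ (ball x r) := by ring

theorem IsDoublingMeasure.measure_ball_le_pow_mul_of_mem (hdb : IsDoublingMeasure μ c_d)
    {x a : X} {R ρ : ℝ} (hρ : 0 < ρ) (ha : a ∈ ball x R) {k : ℕ} (hR : 2 * R ≤ 2 ^ k * ρ) :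
    μ (ball x R) ≤ (c_d : ℝ≥0∞) ^ k * μ (ball a ρ) := by
  have hxa : ball x R ⊆ ball a (2 * R) :=
    ball_subset_ball' (by linarith [mem_ball'.1 ha])
  exact (measure_mono hxa).trans (hdb.measure_ball_le_pow_mul a hρ hR)

end Doubling

section Measure

variable {α : Type*} [MeasurableSpace α] {μ : Measure α}

theorem setAverage_nonneg {g : α → ℝ} (hg : ∀ x, 0 ≤ g x) (s : Set α) :
    0 ≤ ⨍ x in s, g x ∂μ :=
  integral_nonneg hg

theorem lintegral_ofReal_eq_ofReal_setAverage_mul {g : α → ℝ} {s : Set α} (hs : μ s ≠ ∞)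
    (hg : IntegrableOn g s μ) (hg0 : ∀ x, 0 ≤ g x) :
    ∫⁻ x in s, ENNReal.ofReal (g x) ∂μ = ENNReal.ofReal (⨍ x in s, g x ∂μ) * μ s := by
  rw [← ofReal_integral_eq_lintegral_ofReal hg (ae_of_all _ hg0), ← measure_smul_setAverage g hs,
    smul_eq_mul, mul_comm, ENNReal.ofReal_mul (setAverage_nonneg hg0 s), measureReal_def,
    ENNReal.ofReal_toReal hs]

theorem setIntegral_le_mul_toReal_of_lintegral_le {g : α → ℝ} (hg0 : ∀ x, 0 ≤ g x) {s : Set α}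
    {a : ℝ} {m : ℝ≥0∞} (ha : 0 ≤ a) (hm : m ≠ ∞)
    (h : ∫⁻ x in s, ENNReal.ofReal (g x) ∂μ ≤ ENNReal.ofReal a * m) :
    ∫ x in s, g x ∂μ ≤ a * m.toReal :=
  calc ∫ x in s, g x ∂μ ≤ (∫⁻ x in s, ENNReal.ofReal (g x) ∂μ).toReal := by
        simpa only [Real.norm_eq_abs, abs_of_nonneg (hg0 _)]
          using (le_abs_self _).trans (norm_integral_le_lintegral_norm (μ := μ.restrict s) g)
    _ ≤ (ENNReal.ofReal a * m).toReal := ENNReal.toReal_mono (by finiteness) h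
    _ = a * m.toReal := by rw [ENNReal.toReal_mul, ENNReal.toReal_ofReal ha]

theorem isCoboundedUnder_ge_ae [NeZero μ] (g : α → ℝ) : (ae μ).IsCoboundedUnder (· ≥ ·) g := by
  by_contra h
  simp only [IsCoboundedUnder, IsCobounded, eventually_map, not_exists, not_forall,
    not_le] at h
  have hall : ∀ᵐ x ∂μ, ∀ n : ℕ, (n : ℝ) ≤ g x := ae_all_iff.2 fun n => by
    obtain ⟨a, ha, hna⟩ := h n
    exact ha.mono fun x hx => hna.le.trans hx
  obtain ⟨x, hx⟩ := hall.exists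
  obtain ⟨n, hn⟩ := exists_nat_gt (g x)
  exact (hx n).not_gt hn

theorem exists_mem_notMem_lt_of_essInf_lt {s N : Set α} {g : α → ℝ} {t : ℝ}
    (hs : MeasurableSet s) (hμs : μ s ≠ 0) (hN : μ N = 0) (h : essInf g (μ.restrict s) < t) :
    ∃ z ∈ s, z ∉ N ∧ g z < t := by
  have : NeZero (μ.restrict s) := ⟨by rwa [Ne, Measure.restrict_eq_zero]⟩
  have hfreq : ∃ᶠ z in ae (μ.restrict s), g z < t :=
    frequently_lt_of_liminf_lt (isCoboundedUnder_ge_ae g) h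
  have hev : ∀ᵐ z ∂μ.restrict s, z ∈ s ∧ z ∉ N :=
    (ae_restrict_mem hs).and (ae_restrict_of_ae (measure_eq_zero_iff_ae_notMem.1 hN))
  obtain ⟨z, ⟨hzs, hzN⟩, hz⟩ := (hev.and_frequently hfreq).exists
  exact ⟨z, hzs, hzN, hz⟩

theorem measure_le_mul_measure_iUnion_of_subset_iUnion {ι : Type*} [Countable ι]
    {ν ρ : Measure α} {s : Set α} {P Q : ι → Set α} {C : ℝ≥0∞} (hs : s ⊆ ⋃ i, Q i)
    (hQ : ∀ i, ν (Q i) ≤ C * ρ (P i)) (hPm : ∀ i, MeasurableSet (P i))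
    (hPd : Pairwise (Disjoint on P)) :
    ν s ≤ C * ρ (⋃ i, P i) :=
  calc ν s ≤ ∑' i, ν (Q i) := (measure_mono hs).trans (measure_iUnion_le Q)
    _ ≤ ∑' i, C * ρ (P i) := ENNReal.tsum_le_tsum hQ
    _ = C * ρ (⋃ i, P i) := by rw [ENNReal.tsum_mul_left, measure_iUnion hPd hPm]

theorem ENNReal.eq_zero_of_forall_natCast_mul_le {m K : ℝ≥0∞} (hK : K ≠ ∞)
    (h : ∀ n : ℕ, (n : ℝ≥0∞) * m ≤ K) : m = 0 := by
  by_contra hm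
  obtain ⟨n, hn⟩ := ENNReal.exists_nat_mul_gt hm hK
  exact (h n).not_gt hn

end Measure

section Covering

variable {X : Type*} [MetricSpace X]

theorem ball_eq_ball_min_of_subset {a x₀ : X} {ρ R : ℝ} (hρ : 0 < ρ)
    (hsub : ball a ρ ⊆ ball x₀ R) : ball a ρ = ball a (min ρ (2 * R)) := by
  refine Subset.antisymm (fun z hz => ?_) (ball_subset_ball (min_le_left _ _))
  have hza : dist z a ≤ dist z x₀ + dist a x₀ := dist_triangle_right z a x₀
  have h₁ := mem_ball.1 (hsub hz)
  have h₂ := mem_ball.1 (hsub (mem_ball_self hρ))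
  exact mem_ball.2 (lt_min (mem_ball.1 hz) (by linarith))

/-- The radii need not be bounded: a ball inside `ball x₀ R` is unchanged when its radius is cut
down to `2 * R`, and Vitali's lemma applies to the cut-down family. -/
theorem exists_disjoint_subfamily_ball_subset_ball_six {ι : Type*} {a : ι → X} {ρ : ι → ℝ}
    {x₀ : X} {R : ℝ} (hρ : ∀ i, 0 < ρ i) (hsub : ∀ i, ball (a i) (ρ i) ⊆ ball x₀ R) :
    ∃ u : Set ι, u.PairwiseDisjoint (fun i => ball (a i) (ρ i)) ∧
      ∀ i, ∃ j ∈ u, ball (a i) (ρ i) ⊆ ball (a j) (6 * ρ j) := by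
  have hball i : ball (a i) (ρ i) = ball (a i) (min (ρ i) (2 * R)) :=
    ball_eq_ball_min_of_subset (hρ i) (hsub i)
  have hmin i : 0 < min (ρ i) (2 * R) :=
    lt_min (hρ i) (by linarith [pos_of_mem_ball (hsub i (mem_ball_self (hρ i)))])
  obtain ⟨u, -, hdisj, hcov⟩ := Vitali.exists_disjoint_subfamily_covering_enlargement_closedBall
    univ a (fun i => min (ρ i) (2 * R)) (2 * R) (fun i _ => min_le_right _ _) 4 (by norm_num)
  refine ⟨u, fun i hi j hj hij => ?_, fun i => ?_⟩
  · rw [Function.onFun, hball i, hball j]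
    exact (hdisj hi hj hij).mono ball_subset_closedBall ball_subset_closedBall
  · obtain ⟨j, hj, hij⟩ := hcov i (mem_univ i)
    refine ⟨j, hj, (hball i).trans_subset (ball_subset_closedBall.trans (hij.trans ?_))⟩
    exact closedBall_subset_ball (by linarith [hmin j, min_le_left (ρ j) (2 * R)])

variable [MeasurableSpace X] [OpensMeasurableSpace X] {μ : Measure X} [μ.IsOpenPosMeasure]

theorem exists_countable_disjoint_subfamily_ball_subset_ball_six {ι : Type*} {a : ι → X}
    {ρ : ι → ℝ} {x₀ : X} {R : ℝ} (hR : μ (ball x₀ R) ≠ ∞) (hρ : ∀ i, 0 < ρ i)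
    (hsub : ∀ i, ball (a i) (ρ i) ⊆ ball x₀ R) :
    ∃ u : Set ι, u.Countable ∧ Pairwise (Disjoint on fun j : u => ball (a j) (ρ j)) ∧
      ∀ i, ∃ j : u, ball (a i) (ρ i) ⊆ ball (a j) (6 * ρ j) := by
  obtain ⟨u, hdisj, hcov⟩ := exists_disjoint_subfamily_ball_subset_ball_six hρ hsub
  have hdisj' : Pairwise (Disjoint on fun j : u => ball (a j) (ρ j)) :=
    fun i j hij => hdisj i.2 j.2 (Subtype.coe_injective.ne hij)
  have hpos := Measure.countable_meas_pos_of_disjoint_of_meas_iUnion_ne_top μ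
    (fun _ => measurableSet_ball) hdisj'
    (ne_top_of_le_ne_top hR (measure_mono (iUnion_subset fun j => hsub j)))
  have huniv : {j : u | 0 < μ (ball (a j) (ρ j))} = univ :=
    eq_univ_of_forall fun j => measure_ball_pos μ _ (hρ j)
  rw [huniv, countable_univ_iff] at hpos
  exact ⟨u, countable_coe_iff.1 hpos, hdisj', fun i =>
    let ⟨j, hj, hij⟩ := hcov i; ⟨⟨j, hj⟩, hij⟩⟩

end Covering

section MaximalSuperlevel

variable {X : Type*} [MetricSpace X] [MeasurableSpace X] {μ : Measure X} {f : X → ℝ}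
  {U : Set X} {t : ℝ}

/-- The set `{M_U f > t}` for the maximal function over balls contained in `U`, written as a union
of balls rather than through a supremum (which is junk where it is unbounded). -/
def maximalSuperlevel (μ : Measure X) (f : X → ℝ) (U : Set X) (t : ℝ) : Set X :=
  {y | ∃ a ρ, 0 < ρ ∧ y ∈ ball a ρ ∧ ball a ρ ⊆ U ∧ t < ⨍ z in ball a ρ, f z ∂μ}

theorem maximalSuperlevel_subset : maximalSuperlevel μ f U t ⊆ U :=
  fun _ ⟨_, _, _, hy, hsub, _⟩ => hsub hy

theorem ball_subset_maximalSuperlevel {a : X} {ρ : ℝ} (hρ : 0 < ρ) (hsub : ball a ρ ⊆ U)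
    (ht : t < ⨍ z in ball a ρ, f z ∂μ) : ball a ρ ⊆ maximalSuperlevel μ f U t :=
  fun _ hy => ⟨a, ρ, hρ, hy, hsub, ht⟩

theorem setAverage_le_of_notMem_maximalSuperlevel {z b : X} {σ : ℝ}
    (hz : z ∉ maximalSuperlevel μ f U t) (hσ : 0 < σ) (hzb : z ∈ ball b σ) (hsub : ball b σ ⊆ U) :
    ⨍ y in ball b σ, f y ∂μ ≤ t :=
  not_lt.1 fun h => hz ⟨b, σ, hσ, hzb, hsub, h⟩

variable [OpensMeasurableSpace X] [μ.IsOpenPosMeasure] {c_d : ℝ≥0}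

theorem ofReal_mul_measure_maximalSuperlevel_le (hdb : IsDoublingMeasure μ c_d) {x₀ : X}
    {R : ℝ} (hR : μ (ball x₀ R) ≠ ∞) (hf0 : ∀ x, 0 ≤ f x) (hf : IntegrableOn f (ball x₀ R) μ)
    (t : ℝ) :
    ENNReal.ofReal t * μ (maximalSuperlevel μ f (ball x₀ R) t) ≤
      (c_d : ℝ≥0∞) ^ 3 * ∫⁻ y in ball x₀ R, ENNReal.ofReal (f y) ∂μ := by
  set S := maximalSuperlevel μ f (ball x₀ R) t
  have hwit (y : S) := y.2
  choose a ρ hρ hya hsub havg using hwit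
  obtain ⟨u, hu, hdisj, hcov⟩ := exists_countable_disjoint_subfamily_ball_subset_ball_six hR hρ hsub
  have := hu.to_subtype
  have hS : S ⊆ ⋃ j : u, ball (a j) (6 * ρ j) := fun y hy =>
    let ⟨j, hj⟩ := hcov ⟨y, hy⟩; mem_iUnion.2 ⟨j, hj (hya _)⟩
  have hj (j : u) : (ENNReal.ofReal t • μ) (ball (a j) (6 * ρ j)) ≤
      (c_d : ℝ≥0∞) ^ 3 * μ.withDensity (fun y => ENNReal.ofReal (f y)) (ball (a j) (ρ j)) := by
    rw [Measure.smul_apply, smul_eq_mul, withDensity_apply _ measurableSet_ball,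
      lintegral_ofReal_eq_ofReal_setAverage_mul
        (ne_top_of_le_ne_top hR (measure_mono (hsub j))) (hf.mono_set (hsub j)) hf0]
    calc ENNReal.ofReal t * μ (ball (a j) (6 * ρ j))
        ≤ ENNReal.ofReal t * ((c_d : ℝ≥0∞) ^ 3 * μ (ball (a j) (ρ j))) := by
          gcongr
          exact hdb.measure_ball_le_pow_mul _ (hρ j) (by linarith [hρ j])
      _ = (c_d : ℝ≥0∞) ^ 3 * (ENNReal.ofReal t * μ (ball (a j) (ρ j))) := by ring
      _ ≤ _ := by gcongr; exact (havg j).le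
  calc ENNReal.ofReal t * μ S = (ENNReal.ofReal t • μ) S := rfl
    _ ≤ (c_d : ℝ≥0∞) ^ 3 * μ.withDensity (fun y => ENNReal.ofReal (f y))
          (⋃ j : u, ball (a j) (ρ j)) :=
      measure_le_mul_measure_iUnion_of_subset_iUnion hS hj (fun _ => measurableSet_ball) hdisj
    _ ≤ (c_d : ℝ≥0∞) ^ 3 * μ.withDensity (fun y => ENNReal.ofReal (f y)) (ball x₀ R) := by
      gcongr; exact iUnion_subset fun j => hsub j
    _ = _ := by rw [withDensity_apply _ measurableSet_ball]

end MaximalSuperlevel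

section ReverseHolder

variable {X : Type*} [MetricSpace X] [MeasurableSpace X] {μ : Measure X} {f : X → ℝ} {p c : ℝ}

theorem ReverseHolder.mono (hRH : ReverseHolder μ p c f) (hf0 : ∀ x, 0 ≤ f x) {c' : ℝ}
    (hc : c ≤ c') : ReverseHolder μ p c' f := fun x r hr =>
  ⟨(hRH x r hr).1, (hRH x r hr).2.trans
    (mul_le_mul_of_nonneg_right hc (setAverage_nonneg hf0 _))⟩

theorem ReverseHolder.setAverage_rpow_le (hRH : ReverseHolder μ p c f) (hp : 0 < p)
    (hc : 0 ≤ c) (hf0 : ∀ x, 0 ≤ f x) {b : X} {σ t : ℝ} (hσ : 0 < σ)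
    (ht : ⨍ y in ball b σ, f y ∂μ ≤ t) :
    ⨍ y in ball b σ, f y ^ p ∂μ ≤ (c * t) ^ p := by
  set A := ⨍ y in ball b σ, f y ^ p ∂μ
  have hA : 0 ≤ A := setAverage_nonneg (fun y => Real.rpow_nonneg (hf0 y) p) _
  have hRHb : A ^ (1 / p) ≤ c * ⨍ y in ball b σ, f y ∂μ := (hRH b σ hσ).2
  calc A = (A ^ (1 / p)) ^ p := by rw [← Real.rpow_mul hA, one_div_mul_cancel hp.ne', Real.rpow_one]
    _ ≤ (c * ⨍ y in ball b σ, f y ∂μ) ^ p := by gcongr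
    _ ≤ (c * t) ^ p := by
      have hcavg : 0 ≤ c * ⨍ y in ball b σ, f y ∂μ := (Real.rpow_nonneg hA _).trans hRHb
      gcongr

end ReverseHolder

theorem exists_lt_and_not_succ_of_not {P : ℕ → Prop} {K : ℕ} (h0 : P 0) (hK : ¬ P K) :
    ∃ k < K, P k ∧ ¬ P (k + 1) := by
  by_contra! h
  have hle : ∀ k ≤ K, P k := by
    intro k hk
    induction k with
    | zero => exact h0
    | succ k ih => exact h k (by omega) (ih (by omega))
  exact hK (hle K le_rfl)

section BallSelection

variable {X : Type*} [MetricSpace X] [MeasurableSpace X] {μ : Measure X} {f : X → ℝ}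
  {x₀ y z₀ : X} {r₀ t : ℝ}

theorem exists_heavy_ball_light_eight_mul {a : X} {ρ : ℝ} (hρ : 0 < ρ) (hρr₀ : ρ < r₀)
    (hy : y ∈ ball x₀ r₀) (hya : y ∈ ball a ρ) (hz₀ : z₀ ∈ ball x₀ r₀)
    (hz₀S : z₀ ∉ maximalSuperlevel μ f (ball x₀ (100 * r₀)) t)
    (ht : t < ⨍ z in ball a ρ, f z ∂μ) :
    ∃ k : ℕ, ball a (8 ^ (k + 1) * ρ) ⊆ ball x₀ (100 * r₀) ∧
      t < ⨍ z in ball a (8 ^ k * ρ), f z ∂μ ∧ ⨍ z in ball a (8 ^ (k + 1) * ρ), f z ∂μ ≤ t := by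
  -- `3 * r₀ < 8 ^ (n + 1) * ρ ≤ 24 * r₀`: the ball reaches `z₀` but stays inside `100B₀`.
  obtain ⟨n, hn, hn'⟩ := exists_nat_pow_near (x := 3 * r₀ / ρ)
    (by rw [le_div_iff₀ hρ]; linarith) (by norm_num : (1 : ℝ) < 8)
  rw [le_div_iff₀ hρ] at hn
  rw [div_lt_iff₀ hρ] at hn'
  have hax : dist a x₀ < 2 * r₀ := by
    linarith [dist_triangle a y x₀, mem_ball'.1 hya, mem_ball.1 hy]
  have hsub : ∀ k ≤ n + 1, ball a (8 ^ k * ρ) ⊆ ball x₀ (100 * r₀) := by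
    intro k hk
    have : (8 : ℝ) ^ k ≤ 8 ^ (n + 1) := pow_le_pow_right₀ (by norm_num) hk
    refine ball_subset_ball' ?_
    nlinarith [pow_succ (8 : ℝ) n]
  have hz₀a : z₀ ∈ ball a (8 ^ (n + 1) * ρ) := by
    rw [mem_ball]
    linarith [dist_triangle z₀ x₀ a, mem_ball.1 hz₀, dist_comm a x₀]
  have hlight := setAverage_le_of_notMem_maximalSuperlevel hz₀S (by positivity) hz₀a
    (hsub _ le_rfl)
  obtain ⟨k, hk, hheavy, hnot⟩ :=
    exists_lt_and_not_succ_of_not (P := fun k => t < ⨍ z in ball a (8 ^ k * ρ), f z ∂μ)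
      (by simpa only [pow_zero, one_mul] using ht) (not_lt.2 hlight)
  exact ⟨k, hsub (k + 1) hk, hheavy, not_lt.1 hnot⟩

theorem exists_heavy_ball_light_ball {c_d : ℝ≥0} (hdb : IsDoublingMeasure μ c_d)
    (hc_d : 1 ≤ c_d) (hz₀ : z₀ ∈ ball x₀ r₀)
    (hz₀S : z₀ ∉ maximalSuperlevel μ f (ball x₀ (100 * r₀)) t) (hy : y ∈ ball x₀ r₀)
    (hyS : y ∈ maximalSuperlevel μ f (ball x₀ (100 * r₀)) t) :
    ∃ a ρ b σ, 0 < ρ ∧ y ∈ ball a ρ ∧ ball a ρ ⊆ ball x₀ (100 * r₀) ∧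
      t < ⨍ z in ball a ρ, f z ∂μ ∧ 0 < σ ∧ ⨍ z in ball b σ, f z ∂μ ≤ t ∧
      ball a (6 * ρ) ∩ ball x₀ r₀ ⊆ ball b σ ∧
      μ (ball b σ) ≤ (c_d : ℝ≥0∞) ^ 8 * μ (ball a ρ) := by
  obtain ⟨a, ρ, hρ, hya, hsub, ht⟩ := hyS
  have hr₀ : 0 < r₀ := pos_of_mem_ball hy
  have hB₀ : ball x₀ r₀ ⊆ ball x₀ (100 * r₀) := ball_subset_ball (by linarith)
  rcases le_or_gt r₀ ρ with hbig | hsmall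
  · refine ⟨a, ρ, x₀, 100 * r₀, hρ, hya, hsub, ht, by positivity,
      setAverage_le_of_notMem_maximalSuperlevel hz₀S (by positivity) (hB₀ hz₀) subset_rfl,
      fun z hz => hB₀ hz.2,
      hdb.measure_ball_le_pow_mul_of_mem hρ (hsub (mem_ball_self hρ)) (by linarith)⟩
  · obtain ⟨k, hkU, hheavy, hlight⟩ :=
      exists_heavy_ball_light_eight_mul hρ hsmall hy hya hz₀ hz₀S ht
    have hρk : 0 < 8 ^ k * ρ := by positivity
    have h8 : 8 ^ (k + 1) * ρ = 2 ^ 3 * (8 ^ k * ρ) := by ring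
    refine ⟨a, 8 ^ k * ρ, a, 8 ^ (k + 1) * ρ, hρk,
      ball_subset_ball (le_mul_of_one_le_left hρ.le (one_le_pow₀ (by norm_num))) hya,
      (ball_subset_ball (by linarith)).trans hkU, hheavy, by positivity, hlight,
      fun z hz => ball_subset_ball (by linarith) hz.1, ?_⟩
    calc μ (ball a (8 ^ (k + 1) * ρ)) ≤ (c_d : ℝ≥0∞) ^ 3 * μ (ball a (8 ^ k * ρ)) :=
          hdb.measure_ball_le_pow_mul a hρk h8.le
      _ ≤ (c_d : ℝ≥0∞) ^ 8 * μ (ball a (8 ^ k * ρ)) := by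
          gcongr
          · exact_mod_cast hc_d
          · norm_num

end BallSelection

section GoodLambda

variable {X : Type*} [MetricSpace X] [MeasurableSpace X] [OpensMeasurableSpace X]
  {μ : Measure X} [μ.IsOpenPosMeasure] {f : X → ℝ} {p c : ℝ} {c_d : ℝ≥0}

theorem lintegral_rpow_inter_maximalSuperlevel_le (hball : ∀ x r, μ (ball x r) ≠ ∞)
    (hdb : IsDoublingMeasure μ c_d) (hc_d : 1 ≤ c_d) (hp : 0 < p) (hc : 0 ≤ c)
    (hf0 : ∀ x, 0 ≤ f x) (hRH : ReverseHolder μ p c f) {x₀ z₀ : X} {r₀ t : ℝ}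
    (hz₀ : z₀ ∈ ball x₀ r₀) (hz₀S : z₀ ∉ maximalSuperlevel μ f (ball x₀ (100 * r₀)) t) :
    ∫⁻ y in ball x₀ r₀ ∩ maximalSuperlevel μ f (ball x₀ (100 * r₀)) t,
        ENNReal.ofReal (f y ^ p) ∂μ ≤
      ENNReal.ofReal ((c * t) ^ p) *
        ((c_d : ℝ≥0∞) ^ 8 * μ (maximalSuperlevel μ f (ball x₀ (100 * r₀)) t)) := by
  set S := maximalSuperlevel μ f (ball x₀ (100 * r₀)) t
  have hpair (y : ↥(ball x₀ r₀ ∩ S)) := exists_heavy_ball_light_ball hdb hc_d hz₀ hz₀S y.2.1 y.2.2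
  choose a ρ b σ hρ hya hsub hheavy hσ hlight hcov hμ using hpair
  obtain ⟨u, hu, hdisj, hsix⟩ :=
    exists_countable_disjoint_subfamily_ball_subset_ball_six (hball x₀ _) hρ hsub
  have := hu.to_subtype
  have hE : ball x₀ r₀ ∩ S ⊆ ⋃ j : u, ball (b j) (σ j) := fun y hy =>
    let ⟨j, hj⟩ := hsix ⟨y, hy⟩; mem_iUnion.2 ⟨j, hcov j ⟨hj (hya _), hy.1⟩⟩
  have hj (j : u) : μ.withDensity (fun y => ENNReal.ofReal (f y ^ p)) (ball (b j) (σ j)) ≤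
      ENNReal.ofReal ((c * t) ^ p) * (c_d : ℝ≥0∞) ^ 8 * μ (ball (a j) (ρ j)) := by
    rw [withDensity_apply _ measurableSet_ball, lintegral_ofReal_eq_ofReal_setAverage_mul
      (hball _ _) (hRH _ _ (hσ j)).1 fun y => Real.rpow_nonneg (hf0 y) p, mul_assoc]
    gcongr
    · exact hRH.setAverage_rpow_le hp hc hf0 (hσ j) (hlight j)
    · exact hμ j
  calc ∫⁻ y in ball x₀ r₀ ∩ S, ENNReal.ofReal (f y ^ p) ∂μ
      ≤ μ.withDensity (fun y => ENNReal.ofReal (f y ^ p)) (ball x₀ r₀ ∩ S) :=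
        withDensity_apply_le _ _
    _ ≤ ENNReal.ofReal ((c * t) ^ p) * (c_d : ℝ≥0∞) ^ 8 * μ (⋃ j : u, ball (a j) (ρ j)) :=
        measure_le_mul_measure_iUnion_of_subset_iUnion hE hj (fun _ => measurableSet_ball) hdisj
    _ ≤ _ := by
        rw [mul_assoc]
        gcongr
        exact iUnion_subset fun j => ball_subset_maximalSuperlevel (hρ j) (hsub j) (hheavy j)

end GoodLambda

section RestrictedMaximal

variable {X : Type*} [MetricSpace X] [MeasurableSpace X] {μ : Measure X} {f : X → ℝ}
  {x₀ y : X} {r₀ t : ℝ}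

def maximalAverages (μ : Measure X) (f : X → ℝ) (x₀ : X) (r₀ : ℝ) (y : X) : Set ℝ :=
  (fun B : X × ℝ => ⨍ z in ball B.1 B.2, |f z| ∂μ) ''
    {B : X × ℝ | 0 < B.2 ∧ y ∈ ball B.1 B.2 ∧ ball B.1 B.2 ⊆ ball x₀ (100 * r₀)}

theorem restrictedMaximal_eq_sSup :
    restrictedMaximal μ f x₀ r₀ y = sSup (maximalAverages μ f x₀ r₀ y) := rfl

theorem restrictedMaximal_nonneg : 0 ≤ restrictedMaximal μ f x₀ r₀ y :=
  Real.sSup_nonneg fun _ ⟨_, _, hs⟩ => hs ▸ setAverage_nonneg (fun _ => abs_nonneg _) _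

theorem mem_maximalSuperlevel_of_lt_mem (hf0 : ∀ x, 0 ≤ f x) {s : ℝ}
    (hs : s ∈ maximalAverages μ f x₀ r₀ y) (ht : t < s) :
    y ∈ maximalSuperlevel μ f (ball x₀ (100 * r₀)) t := by
  obtain ⟨⟨a, ρ⟩, ⟨hρ, hya, hsub⟩, rfl⟩ := hs
  exact ⟨a, ρ, hρ, hya, hsub, by simpa only [abs_of_nonneg (hf0 _)] using ht⟩

theorem mem_maximalSuperlevel_of_lt_restrictedMaximal (hf0 : ∀ x, 0 ≤ f x) (ht : 0 ≤ t)
    (hy : t < restrictedMaximal μ f x₀ r₀ y) :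
    y ∈ maximalSuperlevel μ f (ball x₀ (100 * r₀)) t := by
  rw [restrictedMaximal_eq_sSup] at hy
  rcases (maximalAverages μ f x₀ r₀ y).eq_empty_or_nonempty with hemp | hne
  · rw [hemp, Real.sSup_empty] at hy
    exact absurd ht hy.not_ge
  · obtain ⟨s, hs, hts⟩ := exists_lt_of_lt_csSup hne hy
    exact mem_maximalSuperlevel_of_lt_mem hf0 hs hts

theorem lt_restrictedMaximal_of_mem_maximalSuperlevel (hf0 : ∀ x, 0 ≤ f x)
    (hbdd : BddAbove (maximalAverages μ f x₀ r₀ y))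
    (hy : y ∈ maximalSuperlevel μ f (ball x₀ (100 * r₀)) t) :
    t < restrictedMaximal μ f x₀ r₀ y := by
  obtain ⟨a, ρ, hρ, hya, hsub, ht⟩ := hy
  refine ht.trans_le (le_csSup hbdd ⟨(a, ρ), ⟨hρ, hya, hsub⟩, ?_⟩)
  simp only [abs_of_nonneg (hf0 _)]

theorem measure_maximalSuperlevel_le (hf0 : ∀ x, 0 ≤ f x)
    (hnull : μ {y | ¬ BddAbove (maximalAverages μ f x₀ r₀ y)} = 0) :
    μ (maximalSuperlevel μ f (ball x₀ (100 * r₀)) t) ≤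
      μ (ball x₀ (100 * r₀) ∩ {z | t < restrictedMaximal μ f x₀ r₀ z}) := by
  rw [← measure_sdiff_null hnull]
  exact measure_mono fun z ⟨hzS, hzJ⟩ => ⟨maximalSuperlevel_subset hzS,
    lt_restrictedMaximal_of_mem_maximalSuperlevel hf0 (not_not.1 hzJ) hzS⟩

variable [OpensMeasurableSpace X] [μ.IsOpenPosMeasure] {c_d : ℝ≥0}

theorem measure_not_bddAbove_maximalAverages_eq_zero (hdb : IsDoublingMeasure μ c_d)
    (hU : μ (ball x₀ (100 * r₀)) ≠ ∞) (hf0 : ∀ x, 0 ≤ f x)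
    (hf : IntegrableOn f (ball x₀ (100 * r₀)) μ) :
    μ {y | ¬ BddAbove (maximalAverages μ f x₀ r₀ y)} = 0 := by
  have hA : ∫⁻ y in ball x₀ (100 * r₀), ENNReal.ofReal (f y) ∂μ ≠ ∞ := by
    rw [← ofReal_integral_eq_lintegral_ofReal hf (ae_of_all _ hf0)]
    exact ENNReal.ofReal_ne_top
  refine ENNReal.eq_zero_of_forall_natCast_mul_le (K := (c_d : ℝ≥0∞) ^ 3 * ∫⁻ y in
    ball x₀ (100 * r₀), ENNReal.ofReal (f y) ∂μ) (by finiteness) fun n => ?_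
  calc (n : ℝ≥0∞) * μ {y | ¬ BddAbove (maximalAverages μ f x₀ r₀ y)}
      ≤ ENNReal.ofReal n * μ (maximalSuperlevel μ f (ball x₀ (100 * r₀)) n) := by
        rw [ENNReal.ofReal_natCast]
        gcongr
        exact fun y hy => let ⟨_, hs, hns⟩ := not_bddAbove_iff.1 hy n
          mem_maximalSuperlevel_of_lt_mem hf0 hs hns
    _ ≤ _ := ofReal_mul_measure_maximalSuperlevel_le hdb hU hf0 hf n

end RestrictedMaximal

/-- **Good-λ estimate (Lemma 3.5).** If `f` satisfies the reverse Hölder inequality with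
exponent `1 < p < ∞` in a doubling metric measure space, then for every ball `B₀` and all
`λ > ess inf_{B₀} Mf` one has
`∫_{B₀ ∩ {Mf > λ}} f^p dμ ≤ c' λ^p μ(100B₀ ∩ {Mf > λ})`,
with `c'` depending only on `p`, the doubling constant and the reverse Hölder constant. -/
theorem good_lambda_estimate {X : Type*} [MetricSpace X] [MeasurableSpace X] [BorelSpace X]
    (μ : Measure X)
    (hopen : ∀ U : Set X, IsOpen U → U.Nonempty → 0 < μ U)
    (hbdd : ∀ s : Set X, Bornology.IsBounded s → μ s < ⊤)
    (c_d : ℝ≥0) (hdb : IsDoublingMeasure μ c_d)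
    (p c : ℝ) (hp : 1 < p) :
    ∃ c' : ℝ, 0 < c' ∧
      ∀ f : X → ℝ, (∀ x, 0 ≤ f x) →
        (∀ (x : X) (r : ℝ), 0 < r → IntegrableOn f (ball x r) μ) →
        ReverseHolder μ p c f →
        ∀ (x₀ : X) (r₀ : ℝ), 0 < r₀ →
          ∀ lam : ℝ,
            essInf (restrictedMaximal μ f x₀ r₀) (μ.restrict (ball x₀ r₀)) < lam →
            ∫ y in ball x₀ r₀ ∩ {z | lam < restrictedMaximal μ f x₀ r₀ z}, f y ^ p ∂μ ≤
              c' * lam ^ p *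
                (μ (ball x₀ (100 * r₀) ∩
                  {z | lam < restrictedMaximal μ f x₀ r₀ z})).toReal := by
  have : μ.IsOpenPosMeasure := ⟨fun U hU hne => (hopen U hU hne).ne'⟩
  have hball x r : μ (ball x r) ≠ ∞ := (hbdd _ isBounded_ball).ne
  set D : ℝ≥0 := max c_d 1
  refine ⟨(D : ℝ) ^ 8 * max c 1 ^ p, by positivity, ?_⟩
  intro f hf0 hfint hRH x₀ r₀ hr₀ lam hess
  set S := maximalSuperlevel μ f (ball x₀ (100 * r₀)) lam
  set E := ball x₀ (100 * r₀) ∩ {z | lam < restrictedMaximal μ f x₀ r₀ z}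
  have hnull := measure_not_bddAbove_maximalAverages_eq_zero (r₀ := r₀) hdb (hball _ _) hf0
    (hfint x₀ _ (by positivity))
  obtain ⟨z₀, hz₀, hz₀J, hz₀M⟩ := exists_mem_notMem_lt_of_essInf_lt measurableSet_ball
    (measure_ball_pos μ x₀ hr₀).ne' hnull hess
  have hlam : 0 ≤ lam := restrictedMaximal_nonneg.trans hz₀M.le
  have hz₀S : z₀ ∉ S := fun h =>
    (lt_restrictedMaximal_of_mem_maximalSuperlevel hf0 (not_not.1 hz₀J) h).not_gt hz₀M
  have hE : μ E ≠ ∞ := ne_top_of_le_ne_top (hball _ _) (measure_mono inter_subset_left)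
  have hbound : ∫⁻ y in ball x₀ r₀ ∩ {z | lam < restrictedMaximal μ f x₀ r₀ z},
      ENNReal.ofReal (f y ^ p) ∂μ ≤ ENNReal.ofReal ((max c 1 * lam) ^ p) * ((D : ℝ≥0∞) ^ 8 * μ E) :=
    calc _ ≤ ∫⁻ y in ball x₀ r₀ ∩ S, ENNReal.ofReal (f y ^ p) ∂μ :=
          lintegral_mono_set <| inter_subset_inter_right _ fun _ =>
            mem_maximalSuperlevel_of_lt_restrictedMaximal hf0 hlam
      _ ≤ ENNReal.ofReal ((max c 1 * lam) ^ p) * ((D : ℝ≥0∞) ^ 8 * μ S) :=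
          lintegral_rpow_inter_maximalSuperlevel_le hball (hdb.mono le_sup_left) le_sup_right
            (by linarith) (by positivity) hf0 (hRH.mono hf0 le_sup_left) hz₀ hz₀S
      _ ≤ _ := by grw [measure_maximalSuperlevel_le hf0 hnull]
  refine (setIntegral_le_mul_toReal_of_lintegral_le (fun y => Real.rpow_nonneg (hf0 y) p)
    (by positivity) (by finiteness) hbound).trans_eq ?_
  rw [ENNReal.toReal_mul, ENNReal.toReal_pow, ENNReal.coe_toReal,
    Real.mul_rpow (by positivity) hlam]
  ring
end

section
/- Let (X, d, μ) be a metric measure space with μ doubling and satisfying the annular decay property. Let 1 < p < ∞ and let f ∈ L^1_loc(X) be non-negative and satisfy the reverse Hölder inequality (⨍_B f^p dμ)^{1/p} ≤ c ⨍_B f dμ for all balls B. Then the measure ν(U) = ∫_U f dμ induced by f is doubling: there is a constant c' depending only on c (and the annular decay constants) such that ∫_{2B} f dμ ≤ c' ∫_B f dμ for all balls B of X. -/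
open MeasureTheory Metric
open scoped NNReal ENNReal

/-- `(X, d, μ)` satisfies the `α`-annular decay property with constant `c_a`. -/
def AnnularDecay {X : Type*} [MetricSpace X] [MeasurableSpace X]
    (μ : Measure X) (α c_a : ℝ) : Prop :=
  ∀ (x : X) (r δ : ℝ), 0 < r → 0 < δ → δ < 1 →
    μ (ball x r \ ball x ((1 - δ) * r)) ≤ ENNReal.ofReal (c_a * δ ^ α) * μ (ball x r)

/-!
By Hölder's inequality and the reverse Hölder inequality, the integral of `f` over a subset
`E ⊆ B` with `μ E ≤ ε μ B` is at most `c ε^{1/q} ∫_B f`, where `q` is the conjugate exponent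
of `p`. Annular decay makes the annulus `B(x,r) \ B(x,(1-δ)r)` such a subset with `ε → 0` as
`δ → 0`, so for `δ` small it carries at most half of `∫_{B(x,r)} f`, i.e.
`∫_{B(x,r)} f ≤ 2 ∫_{B(x,(1-δ)r)} f`. Shrinking `B(x,2r)` this way `N` times, with
`(1-δ)^N < 1/2`, gives the doubling constant `2^N`.
-/

open Filter Topology

lemma tendsto_const_mul_rpow_nhdsGT_zero {a : ℝ} (ha : 0 < a) (C : ℝ) :
    Tendsto (fun x : ℝ => C * x ^ a) (𝓝[>] 0) (𝓝 0) := by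
  have h := ((Real.continuousAt_rpow_const 0 a (.inr ha.le)).tendsto.const_mul C).mono_left
    (nhdsWithin_le_nhds (s := Set.Ioi 0))
  rwa [Real.zero_rpow ha.ne', mul_zero] at h

lemma le_pow_mul_of_le_mul_comp_mul {g : ℝ → ℝ} {K θ : ℝ} (hK : 0 ≤ K) (hθ : 0 < θ)
    (hg : ∀ s, 0 < s → g s ≤ K * g (θ * s)) (n : ℕ) {s : ℝ} (hs : 0 < s) :
    g s ≤ K ^ n * g (θ ^ n * s) := by
  induction n with
  | zero => simp
  | succ n ih =>
    calc g s ≤ K ^ n * g (θ ^ n * s) := ih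
      _ ≤ K ^ n * (K * g (θ * (θ ^ n * s))) := by gcongr; exact hg _ (by positivity)
      _ = K ^ (n + 1) * g (θ ^ (n + 1) * s) := by ring_nf

section Holder

variable {X : Type*} [MeasurableSpace X] {μ : Measure X} {f : X → ℝ} {s t : Set X}
  {p q : ℝ}

lemma setIntegral_le_rpow_mul_measureReal_rpow (hpq : p.HolderConjugate q) (hf : 0 ≤ f)
    (hs : μ s ≠ ∞) (hfs : IntegrableOn f s μ) (hfps : IntegrableOn (fun y => f y ^ p) s μ) :
    ∫ y in s, f y ∂μ ≤ (∫ y in s, f y ^ p ∂μ) ^ (1 / p) * μ.real s ^ (1 / q) := by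
  have : IsFiniteMeasure (μ.restrict s) := isFiniteMeasure_restrict.mpr hs
  have hp0 : ENNReal.ofReal p ≠ 0 := by simp [hpq.pos]
  have hfp : MemLp f (ENNReal.ofReal p) (μ.restrict s) := by
    rw [← memLp_norm_rpow_iff hfs.1 hp0 ENNReal.ofReal_ne_top, ENNReal.div_self hp0
      ENNReal.ofReal_ne_top, ENNReal.toReal_ofReal hpq.nonneg, memLp_one_iff_integrable]
    exact hfps.congr (.of_forall fun y => by simp only [Real.norm_of_nonneg (hf y)])
  simpa [Measure.real] using integral_mul_le_Lp_mul_Lq_of_nonneg hpq (.of_forall hf)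
    (.of_forall fun _ => zero_le_one) hfp (memLp_const 1)

/-- Writing both integrals as `μ.real s` times an average makes this hold also when `μ s = 0`. -/
lemma rpow_setIntegral_rpow_mul_le_of_setAverage (hpq : p.HolderConjugate q) (hf : 0 ≤ f)
    (hs : μ s ≠ ∞) {c : ℝ}
    (hRH : (⨍ y in s, f y ^ p ∂μ) ^ (1 / p) ≤ c * ⨍ y in s, f y ∂μ) :
    (∫ y in s, f y ^ p ∂μ) ^ (1 / p) * μ.real s ^ (1 / q) ≤ c * ∫ y in s, f y ∂μ := by
  have hM : 0 ≤ μ.real s := measureReal_nonneg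
  have hA : 0 ≤ ⨍ y in s, f y ^ p ∂μ :=
    integral_nonneg fun y => Real.rpow_nonneg (hf y) p
  have hMM : μ.real s ^ (1 / p) * μ.real s ^ (1 / q) = μ.real s := by
    rw [← Real.rpow_add' hM (by simp [hpq.inv_add_inv_eq_one]), one_div, one_div,
      hpq.inv_add_inv_eq_one, Real.rpow_one]
  rw [← measure_smul_setAverage _ hs, ← measure_smul_setAverage _ hs, smul_eq_mul, smul_eq_mul,
    Real.mul_rpow hM hA]
  calc μ.real s ^ (1 / p) * (⨍ y in s, f y ^ p ∂μ) ^ (1 / p) * μ.real s ^ (1 / q)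
      = (μ.real s ^ (1 / p) * μ.real s ^ (1 / q)) * (⨍ y in s, f y ^ p ∂μ) ^ (1 / p) := by ring
    _ = μ.real s * (⨍ y in s, f y ^ p ∂μ) ^ (1 / p) := by rw [hMM]
    _ ≤ μ.real s * (c * ⨍ y in s, f y ∂μ) := by gcongr
    _ = c * (μ.real s * ⨍ y in s, f y ∂μ) := by ring

lemma setIntegral_le_mul_rpow_mul_setIntegral_of_subset (hpq : p.HolderConjugate q)
    (hf : 0 ≤ f) (hts : t ⊆ s) (hs : μ s ≠ ∞) {ε : ℝ} (hε : 0 ≤ ε)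
    (hμ : μ t ≤ ENNReal.ofReal ε * μ s) (hfs : IntegrableOn f s μ)
    (hfps : IntegrableOn (fun y => f y ^ p) s μ) {c : ℝ}
    (hRH : (⨍ y in s, f y ^ p ∂μ) ^ (1 / p) ≤ c * ⨍ y in s, f y ∂μ) :
    ∫ y in t, f y ∂μ ≤ c * ε ^ (1 / q) * ∫ y in s, f y ∂μ := by
  have ht : μ t ≠ ∞ := (measure_mono hts).trans_lt hs.lt_top |>.ne
  have hμt : μ.real t ≤ ε * μ.real s := by
    simpa [Measure.real, ENNReal.toReal_ofReal hε] using
      ENNReal.toReal_mono (ENNReal.mul_ne_top ENNReal.ofReal_ne_top hs) hμ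
  have hpow : 0 ≤ fun y => f y ^ p := fun y => Real.rpow_nonneg (hf y) p
  calc ∫ y in t, f y ∂μ
      ≤ (∫ y in t, f y ^ p ∂μ) ^ (1 / p) * μ.real t ^ (1 / q) :=
        setIntegral_le_rpow_mul_measureReal_rpow hpq hf ht (hfs.mono_set hts)
          (hfps.mono_set hts)
    _ ≤ (∫ y in s, f y ^ p ∂μ) ^ (1 / p) * (ε * μ.real s) ^ (1 / q) := by
        have := hpq.symm.nonneg
        have := hpq.nonneg
        gcongr
        · exact Real.rpow_nonneg (integral_nonneg hpow) _
        · exact integral_nonneg hpow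
        · exact .of_forall hpow
    _ = ε ^ (1 / q) * ((∫ y in s, f y ^ p ∂μ) ^ (1 / p) * μ.real s ^ (1 / q)) := by
        rw [Real.mul_rpow hε measureReal_nonneg]; ring
    _ ≤ ε ^ (1 / q) * (c * ∫ y in s, f y ∂μ) := by
        have := hpq.symm.nonneg
        exact mul_le_mul_of_nonneg_left
          (rpow_setIntegral_rpow_mul_le_of_setAverage hpq hf hs hRH) (by positivity)
    _ = c * ε ^ (1 / q) * ∫ y in s, f y ∂μ := by ring

end Holder

section Ball

variable {X : Type*} [MetricSpace X] [MeasurableSpace X] [BorelSpace X] {μ : Measure X}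
  {f : X → ℝ} {p q c : ℝ}

lemma setIntegral_ball_le_two_mul_of_annularDecay (hpq : p.HolderConjugate q)
    (hbdd : ∀ s : Set X, Bornology.IsBounded s → μ s < ⊤) {α c_a : ℝ}
    (had : AnnularDecay μ α c_a) {δ ε : ℝ} (hδ : δ ∈ Set.Ioo 0 1) (hε : 0 ≤ ε)
    (hδε : c_a * δ ^ α ≤ ε) (hcε : c * ε ^ (1 / q) ≤ 1 / 2) (hf : 0 ≤ f)
    (hfint : ∀ (x : X) (r : ℝ), 0 < r → IntegrableOn f (ball x r) μ)
    (hRH : ReverseHolder μ p c f) (x : X) (r : ℝ) (hr : 0 < r) :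
    ∫ y in ball x r, f y ∂μ ≤ 2 * ∫ y in ball x ((1 - δ) * r), f y ∂μ := by
  have hsub : ball x ((1 - δ) * r) ⊆ ball x r :=
    ball_subset_ball (by nlinarith [hδ.1])
  have hannulus : μ (ball x r \ ball x ((1 - δ) * r)) ≤ ENNReal.ofReal ε * μ (ball x r) :=
    (had x r δ hr hδ.1 hδ.2).trans (by gcongr)
  have hE := setIntegral_le_mul_rpow_mul_setIntegral_of_subset hpq hf Set.sdiff_subset
    (hbdd _ isBounded_ball).ne hε hannulus (hfint x r hr) (hRH x r hr).1 (hRH x r hr).2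
  rw [setIntegral_sdiff measurableSet_ball (hfint x r hr) hsub] at hE
  have := mul_le_mul_of_nonneg_right hcε (integral_nonneg hf : 0 ≤ ∫ y in ball x r, f y ∂μ)
  linarith

end Ball

theorem induced_measure_doubling_general {X : Type*} [MetricSpace X] [MeasurableSpace X]
    [BorelSpace X] (μ : Measure X)
    (hbdd : ∀ s : Set X, Bornology.IsBounded s → μ s < ⊤)
    (α c_a : ℝ) (hα : 0 < α)
    (had : AnnularDecay μ α c_a)
    (p c : ℝ) (hp : 1 < p) :
    ∃ c' : ℝ, 0 < c' ∧
      ∀ f : X → ℝ, (∀ x, 0 ≤ f x) →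
        (∀ (x : X) (r : ℝ), 0 < r → IntegrableOn f (ball x r) μ) →
        ReverseHolder μ p c f →
        ∀ (x : X) (r : ℝ), 0 < r →
          ∫ y in ball x (2 * r), f y ∂μ ≤ c' * ∫ y in ball x r, f y ∂μ := by
  have hpq := Real.HolderConjugate.conjExponent hp
  obtain ⟨ε, hcε, hε⟩ := (((tendsto_const_mul_rpow_nhdsGT_zero
    (one_div_pos.mpr hpq.symm.pos) c).eventually (ge_mem_nhds one_half_pos)).and
    self_mem_nhdsWithin).exists
  obtain ⟨δ, hδε, hδ⟩ := (((tendsto_const_mul_rpow_nhdsGT_zero hα c_a).eventually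
    (ge_mem_nhds hε)).and (Ioo_mem_nhdsGT one_pos)).exists
  obtain ⟨N, hN⟩ := exists_pow_lt_of_lt_one one_half_pos (sub_lt_self 1 hδ.1)
  refine ⟨2 ^ N, by positivity, fun f hf hfint hRH x r hr => ?_⟩
  calc ∫ y in ball x (2 * r), f y ∂μ
      ≤ 2 ^ N * ∫ y in ball x ((1 - δ) ^ N * (2 * r)), f y ∂μ :=
        le_pow_mul_of_le_mul_comp_mul (g := fun s => ∫ y in ball x s, f y ∂μ) zero_le_two
          (sub_pos.mpr hδ.2)
          (setIntegral_ball_le_two_mul_of_annularDecay hpq hbdd had hδ hε.le hδε hcε hf hfint hRH x)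
          N (by positivity)
    _ ≤ 2 ^ N * ∫ y in ball x r, f y ∂μ := by
        gcongr
        · exact .of_forall hf
        · exact hfint x r hr
        · nlinarith

/-- **Proposition 3.7.** In a doubling metric measure space with the annular decay property,
a non-negative `f ∈ L^1_loc` satisfying the reverse Hölder inequality induces a doubling
measure: `∫_{2B} f dμ ≤ c' ∫_B f dμ` for all balls `B`, with `c'` depending only on the
reverse Hölder constant (and the annular decay constants). -/
theorem induced_measure_doubling {X : Type*} [MetricSpace X] [MeasurableSpace X]
    [BorelSpace X] (μ : Measure X)
    (hopen : ∀ U : Set X, IsOpen U → U.Nonempty → 0 < μ U)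
    (hbdd : ∀ s : Set X, Bornology.IsBounded s → μ s < ⊤)
    (c_d : ℝ≥0) (hdb : IsDoublingMeasure μ c_d)
    (α c_a : ℝ) (hα : 0 < α) (hα1 : α ≤ 1) (hca : 1 ≤ c_a)
    (had : AnnularDecay μ α c_a)
    (p c : ℝ) (hp : 1 < p) :
    ∃ c' : ℝ, 0 < c' ∧
      ∀ f : X → ℝ, (∀ x, 0 ≤ f x) →
        (∀ (x : X) (r : ℝ), 0 < r → IntegrableOn f (ball x r) μ) →
        ReverseHolder μ p c f →
        ∀ (x : X) (r : ℝ), 0 < r →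
          ∫ y in ball x (2 * r), f y ∂μ ≤ c' * ∫ y in ball x r, f y ∂μ :=
  induced_measure_doubling_general μ hbdd α c_a hα had p c hp
end

section
/- Let (X, d, μ) be a metric measure space, 1 < p < ∞, and let f ∈ L^1_loc(X) be non-negative and satisfy the reverse Hölder inequality (⨍_B f^p dμ)^{1/p} ≤ c ⨍_B f dμ for all balls B. Let ν(U) = ∫_U f dμ. Then for every ball B and every μ-measurable set E ⊂ B, one has ν(E)/ν(B) ≤ c' (μ(E)/μ(B))^{1/p'} whenever ν(B) > 0, where 1/p + 1/p' = 1 and c' depends only on c. -/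
open MeasureTheory Metric
open scoped NNReal ENNReal

/-!
Hölder's inequality with the constant function `1` bounds `ν(E) = ∫_E f` by
`(∫_E f^p)^(1/p) μ(E)^(1/p')`. Enlarging `E` to `B` in the first factor and applying the
reverse Hölder inequality on `B`, written with integrals instead of averages, gives
`(∫_B f^p)^(1/p) ≤ c ν(B) / μ(B)^(1/p')`, hence `ν(E) ≤ c ν(B) (μ(E)/μ(B))^(1/p')`.
-/

theorem setIntegral_le_rpow_setIntegral_rpow_mul_measureReal_rpow {α : Type*}
    [MeasurableSpace α] {μ : Measure α} {s : Set α} (hs : μ s ≠ ∞) {p : ℝ} (hp : 1 < p)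
    {f : α → ℝ} (hf0 : 0 ≤ᵐ[μ.restrict s] f) (hf : AEStronglyMeasurable f (μ.restrict s))
    (hfp : IntegrableOn (fun x => f x ^ p) s μ) :
    ∫ x in s, f x ∂μ ≤ (∫ x in s, f x ^ p ∂μ) ^ (1 / p) * μ.real s ^ (1 - 1 / p) := by
  have : IsFiniteMeasure (μ.restrict s) := isFiniteMeasure_restrict.2 hs
  have hpq : p.HolderConjugate p.conjExponent := .conjExponent hp
  have hf_memLp : MemLp f (ENNReal.ofReal p) (μ.restrict s) := by
    refine (integrable_norm_rpow_iff hf (by simp; linarith) ENNReal.ofReal_ne_top).1 ?_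
    rw [ENNReal.toReal_ofReal (by linarith)]
    exact hfp.congr (hf0.mono fun x hx => by simp only [Real.norm_of_nonneg hx])
  have h := integral_mul_le_Lp_mul_Lq_of_nonneg hpq hf0 (ae_of_all _ fun _ => zero_le_one)
    hf_memLp (memLp_const 1)
  simpa [one_div, hpq.one_sub_inv] using h

theorem rpow_le_div_rpow_of_rpow_inv_mul_le {a b c M p : ℝ} (ha : 0 ≤ a) (hM : 0 < M)
    (h : (M⁻¹ * a) ^ (1 / p) ≤ c * (M⁻¹ * b)) :
    a ^ (1 / p) ≤ c * b / M ^ (1 - 1 / p) := by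
  have hMp : 0 < M ^ (1 / p) := Real.rpow_pos_of_pos hM _
  rw [Real.mul_rpow (inv_nonneg.2 hM.le) ha, Real.inv_rpow hM.le, inv_mul_le_iff₀ hMp] at h
  rw [Real.rpow_sub hM, Real.rpow_one, le_div_iff₀ (div_pos hM hMp)]
  calc a ^ (1 / p) * (M / M ^ (1 / p)) = M * (a ^ (1 / p) / M ^ (1 / p)) := by ring
    _ ≤ M * (c * (M⁻¹ * b)) := by gcongr; rwa [div_le_iff₀' hMp]
    _ = c * b := by field_simp

namespace ReverseHolder

variable {X : Type*} [MetricSpace X] [MeasurableSpace X] {μ : Measure X} {p c : ℝ}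
  {f : X → ℝ}

theorem rpow_setIntegral_rpow_ball_le (hRH : ReverseHolder μ p c f) (hf0 : ∀ y, 0 ≤ f y)
    {x : X} {r : ℝ} (hr : 0 < r) (hB : 0 < μ.real (ball x r)) :
    (∫ y in ball x r, f y ^ p ∂μ) ^ (1 / p) ≤
      c * (∫ y in ball x r, f y ∂μ) / μ.real (ball x r) ^ (1 - 1 / p) := by
  refine rpow_le_div_rpow_of_rpow_inv_mul_le
    (integral_nonneg fun y => Real.rpow_nonneg (hf0 y) p) hB ?_
  simpa only [setAverage_eq, smul_eq_mul] using (hRH x r hr).2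

theorem setIntegral_le_mul_measureReal_div_rpow (hp : 1 < p) (hRH : ReverseHolder μ p c f)
    (hf0 : ∀ y, 0 ≤ f y) {x : X} {r : ℝ} (hr : 0 < r) (hf : IntegrableOn f (ball x r) μ)
    (hB : 0 < μ.real (ball x r)) {E : Set X} (hEB : E ⊆ ball x r) :
    ∫ y in E, f y ∂μ ≤
      c * (∫ y in ball x r, f y ∂μ) * (μ.real E / μ.real (ball x r)) ^ (1 - 1 / p) := by
  have hfp := (hRH x r hr).1
  have hE : μ E ≠ ∞ := ((measure_mono hEB).trans_lt (ENNReal.toReal_pos_iff.1 hB).2).ne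
  have hfp_mono : ∫ y in E, f y ^ p ∂μ ≤ ∫ y in ball x r, f y ^ p ∂μ :=
    setIntegral_mono_set hfp (ae_of_all _ fun y => Real.rpow_nonneg (hf0 y) p)
      (ae_of_all _ hEB)
  calc ∫ y in E, f y ∂μ
      ≤ (∫ y in E, f y ^ p ∂μ) ^ (1 / p) * μ.real E ^ (1 - 1 / p) :=
        setIntegral_le_rpow_setIntegral_rpow_mul_measureReal_rpow hE hp (ae_of_all _ hf0)
          (hf.mono_set hEB).aestronglyMeasurable (hfp.mono_set hEB)
    _ ≤ (∫ y in ball x r, f y ^ p ∂μ) ^ (1 / p) * μ.real E ^ (1 - 1 / p) := by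
        gcongr
        exact integral_nonneg fun y => Real.rpow_nonneg (hf0 y) p
    _ ≤ c * (∫ y in ball x r, f y ∂μ) / μ.real (ball x r) ^ (1 - 1 / p) *
          μ.real E ^ (1 - 1 / p) := by
        gcongr
        exact hRH.rpow_setIntegral_rpow_ball_le hf0 hr hB
    _ = c * (∫ y in ball x r, f y ∂μ) * (μ.real E / μ.real (ball x r)) ^ (1 - 1 / p) := by
        rw [Real.div_rpow measureReal_nonneg hB.le]
        ring

end ReverseHolder

theorem nu_ratio_estimate_general {X : Type*} [MetricSpace X] [MeasurableSpace X]
    (μ : Measure X)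
    (hbdd : ∀ s : Set X, Bornology.IsBounded s → μ s < ⊤)
    (p c : ℝ) (hp : 1 < p) :
    ∃ c' : ℝ, 0 < c' ∧
      ∀ f : X → ℝ, (∀ x, 0 ≤ f x) →
        (∀ (x : X) (r : ℝ), 0 < r → IntegrableOn f (ball x r) μ) →
        ReverseHolder μ p c f →
        ∀ (x : X) (r : ℝ), 0 < r →
          ∀ E : Set X, MeasurableSet E → E ⊆ ball x r →
            0 < ∫ y in ball x r, f y ∂μ →
            (∫ y in E, f y ∂μ) / (∫ y in ball x r, f y ∂μ) ≤
              c' * ((μ E).toReal / (μ (ball x r)).toReal) ^ (1 - 1 / p) := by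
  refine ⟨max c 1, zero_lt_one.trans_le (le_max_right _ _), ?_⟩
  intro f hf0 hf hRH x r hr E _ hEB hνB
  have hB_ne_zero : μ (ball x r) ≠ 0 := fun h => by
    simp [Measure.restrict_eq_zero.2 h] at hνB
  have hB : 0 < μ.real (ball x r) :=
    ENNReal.toReal_pos hB_ne_zero (hbdd _ isBounded_ball).ne
  rw [div_le_iff₀ hνB]
  calc ∫ y in E, f y ∂μ
      ≤ c * (∫ y in ball x r, f y ∂μ) * (μ.real E / μ.real (ball x r)) ^ (1 - 1 / p) :=
        hRH.setIntegral_le_mul_measureReal_div_rpow hp hf0 hr (hf x r hr) hB hEB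
    _ ≤ max c 1 * (μ.real E / μ.real (ball x r)) ^ (1 - 1 / p) *
          ∫ y in ball x r, f y ∂μ := by
        rw [mul_right_comm]
        gcongr
        exact le_max_left c 1

/-- **Key absolute-continuity estimate.** If a non-negative `f ∈ L^1_loc` satisfies the
reverse Hölder inequality with exponent `1 < p < ∞` and constant `c`, and
`ν(U) = ∫_U f dμ`, then for every ball `B` and every μ-measurable `E ⊆ B` with `ν(B) > 0`,
`ν(E)/ν(B) ≤ c' (μ(E)/μ(B))^(1/p')`, where `1/p + 1/p' = 1` (so `1/p' = 1 − 1/p`) and `c'`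
depends only on `c`. -/
theorem nu_ratio_estimate {X : Type*} [MetricSpace X] [MeasurableSpace X] [BorelSpace X]
    (μ : Measure X)
    (hopen : ∀ U : Set X, IsOpen U → U.Nonempty → 0 < μ U)
    (hbdd : ∀ s : Set X, Bornology.IsBounded s → μ s < ⊤)
    (p c : ℝ) (hp : 1 < p) :
    ∃ c' : ℝ, 0 < c' ∧
      ∀ f : X → ℝ, (∀ x, 0 ≤ f x) →
        (∀ (x : X) (r : ℝ), 0 < r → IntegrableOn f (ball x r) μ) →
        ReverseHolder μ p c f →
        ∀ (x : X) (r : ℝ), 0 < r →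
          ∀ E : Set X, MeasurableSet E → E ⊆ ball x r →
            0 < ∫ y in ball x r, f y ∂μ →
            (∫ y in E, f y ∂μ) / (∫ y in ball x r, f y ∂μ) ≤
              c' * ((μ E).toReal / (μ (ball x r)).toReal) ^ (1 - 1 / p) :=
  nu_ratio_estimate_general μ hbdd p c hp
end
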